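/- Let ψ₁, ψ₂ > 0. The scale mixture integral ∫₀^∞ (2πλ²)^{−1/2} exp(−β²/(2λ²)) p_LL(λ|ψ₁,ψ₂) dλ equals (1/√(32π)) · [ (1/ψ₁)·E_{(1+ψ₁)/(2ψ₁)}(β²/2) + (1/ψ₂)·(2/β²)^{(1+ψ₂)/(2ψ₂)}·γ((1+ψ₂)/(2ψ₂), β²/2) ] for every β ≠ 0. -/

import Mathlib

open MeasureTheory Real Set

/-- Generalized exponential integral E_n(x) = ∫₁^∞ e^{−xt} t^{−n} dt. -/
noncomputable def genExpIntegral (n x : ℝ) : ℝ :=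
  ∫ t in Ioi (1 : ℝ), Real.exp (-x * t) * t ^ (-n)

/-- Lower incomplete gamma function γ(s,x) = ∫₀^x v^{s−1} e^{−v} dv. -/
noncomputable def lowerGamma (s x : ℝ) : ℝ :=
  ∫ v in Ioc (0 : ℝ) x, v ^ (s - 1) * Real.exp (-v)

/-!
Substituting `λ = t^(-1/2)` turns the Gaussian kernel into `(2π)^(-1/2) t^(1/2) e^(-β²t/2)` and
both branches of the log-Laplace prior into pure powers of `t`. The branch `λ ≤ 1` becomes
`t ≥ 1` and yields `E_n(β²/2)` as it stands; the branch `λ > 1` becomes `0 < t < 1`, and the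
rescaling `v = (β²/2) t` turns it into the lower incomplete gamma function.
-/

theorem integral_rpow_mul_exp_neg_mul_Ioo_zero_one {x : ℝ} (hx : 0 < x) (s : ℝ) :
    ∫ t in Ioo 0 1, t ^ (s - 1) * exp (-x * t) = x ^ (-s) * lowerGamma s x := by
  have hscale : ∀ t ∈ uIcc (0 : ℝ) 1,
      t ^ (s - 1) * exp (-x * t) = x ^ (1 - s) * ((x * t) ^ (s - 1) * exp (-(x * t))) := by
    intro t ht
    rw [uIcc_of_le zero_le_one] at ht
    rw [mul_rpow hx.le ht.1, neg_mul, ← mul_assoc, ← mul_assoc, ← rpow_add hx]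
    simp
  rw [← integral_Ioc_eq_integral_Ioo, ← intervalIntegral.integral_of_le zero_le_one,
    intervalIntegral.integral_congr hscale, intervalIntegral.integral_const_mul,
    intervalIntegral.integral_comp_mul_left (fun v => v ^ (s - 1) * exp (-v)) hx.ne',
    mul_zero, mul_one, intervalIntegral.integral_of_le hx.le, lowerGamma, smul_eq_mul,
    ← mul_assoc, ← rpow_neg_one, ← rpow_add hx]
  ring_nf

theorem integrableOn_rpow_mul_exp_neg_mul_Ioo_zero_one {x s : ℝ} (hx : 0 < x) (hs : 0 < s) :
    IntegrableOn (fun t => t ^ (s - 1) * exp (-x * t)) (Ioo 0 1) := by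
  have := integrableOn_rpow_mul_exp_neg_mul_rpow (p := 1) (s := s - 1) (by linarith) one_pos hx
  simpa using this.mono_set Ioo_subset_Ioi_self

theorem integrableOn_exp_neg_mul_mul_rpow_neg_Ioi_one {x n : ℝ} (hx : 0 < x) (hn : 0 ≤ n) :
    IntegrableOn (fun t => exp (-x * t) * t ^ (-n)) (Ioi 1) := by
  have hmeas : ContinuousOn (fun t => exp (-x * t) * t ^ (-n)) (Ioi 1) := by
    refine (by fun_prop : Continuous fun t => exp (-x * t)).continuousOn.mul ?_
    exact continuousOn_id.rpow_const fun t ht => Or.inl (zero_lt_one.trans ht).ne'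
  refine (exp_neg_integrableOn_Ioi 1 hx).mono' (hmeas.aestronglyMeasurable measurableSet_Ioi) ?_
  refine (ae_restrict_iff' measurableSet_Ioi).2 (.of_forall fun t (ht : 1 < t) => ?_)
  rw [norm_mul, norm_of_nonneg (exp_pos _).le, norm_of_nonneg (rpow_nonneg (by linarith) _)]
  exact mul_le_of_le_one_right (exp_pos _).le (rpow_le_one_of_one_le_of_nonpos ht.le (by linarith))

theorem integrableOn_and_integral_Ici_one_eq_genExpIntegral {f : ℝ → ℝ} {c x n : ℝ}
    (hf : EqOn f (fun t => c * (exp (-x * t) * t ^ (-n))) (Ici 1)) (hx : 0 < x) (hn : 0 ≤ n) :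
    IntegrableOn f (Ici 1) ∧ ∫ t in Ici 1, f t = c * genExpIntegral n x := by
  refine ⟨IntegrableOn.congr_fun ?_ hf.symm measurableSet_Ici, ?_⟩
  · rw [integrableOn_Ici_iff_integrableOn_Ioi]
    exact (integrableOn_exp_neg_mul_mul_rpow_neg_Ioi_one hx hn).const_mul c
  · rw [setIntegral_congr_fun measurableSet_Ici hf, integral_Ici_eq_integral_Ioi,
      integral_const_mul, genExpIntegral]

theorem integrableOn_and_integral_Ioo_zero_one_eq_lowerGamma {f : ℝ → ℝ} {c x s : ℝ}
    (hf : EqOn f (fun t => c * (t ^ (s - 1) * exp (-x * t))) (Ioo 0 1)) (hx : 0 < x) (hs : 0 < s) :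
    IntegrableOn f (Ioo 0 1) ∧ ∫ t in Ioo 0 1, f t = c * x ^ (-s) * lowerGamma s x := by
  refine ⟨IntegrableOn.congr_fun ?_ hf.symm measurableSet_Ioo, ?_⟩
  · exact (integrableOn_rpow_mul_exp_neg_mul_Ioo_zero_one hx hs).const_mul c
  · rw [setIntegral_congr_fun measurableSet_Ioo hf, integral_const_mul,
      integral_rpow_mul_exp_neg_mul_Ioo_zero_one hx, mul_assoc]

noncomputable def normalScaleDensity (β l : ℝ) : ℝ :=
  (2 * π * l ^ 2) ^ (-(1 : ℝ) / 2) * exp (-β ^ 2 / (2 * l ^ 2))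

noncomputable def logLaplaceDensity (ψ₁ ψ₂ l : ℝ) : ℝ :=
  if l ≤ 1 then 1 / (2 * ψ₁) * l ^ (-1 + 1 / ψ₁) else 1 / (2 * ψ₂) * l ^ (-1 - 1 / ψ₂)

/- `|p| * t ^ (p - 1)` with `p = -1/2` is the Jacobian in the shape of `integral_comp_rpow_Ioi`. -/
theorem abs_mul_rpow_smul_normalScaleDensity_mul_rpow (β a : ℝ) {t : ℝ} (ht : 0 < t) :
    (|-(1 : ℝ) / 2| * t ^ (-(1 : ℝ) / 2 - 1)) •
        (normalScaleDensity β (t ^ (-(1 : ℝ) / 2)) * (t ^ (-(1 : ℝ) / 2)) ^ a) =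
      (2 * π) ^ (-(1 : ℝ) / 2) / 2 * (exp (-(β ^ 2 / 2) * t) * t ^ (-(a + 2) / 2)) := by
  have hsq : (t ^ (-(1 : ℝ) / 2)) ^ 2 = t⁻¹ := by
    rw [← rpow_natCast, ← rpow_mul ht.le, ← rpow_neg_one]; norm_num
  have harg : -β ^ 2 / (2 * t⁻¹) = -(β ^ 2 / 2) * t := by field_simp
  rw [normalScaleDensity, hsq, harg, mul_rpow (by positivity) (by positivity), ← rpow_neg_one,
    ← rpow_mul ht.le, ← rpow_mul ht.le, smul_eq_mul, abs_of_neg (by norm_num)]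
  have hexp : -(a + 2) / 2 = (-(1 : ℝ) / 2 - 1) + -1 * (-(1 : ℝ) / 2) + -(1 : ℝ) / 2 * a := by
    ring
  rw [hexp, rpow_add ht, rpow_add ht]
  ring

theorem logLaplaceDensity_rpow_neg_half_of_one_le (ψ₁ ψ₂ : ℝ) {t : ℝ} (ht : 1 ≤ t) :
    logLaplaceDensity ψ₁ ψ₂ (t ^ (-(1 : ℝ) / 2)) =
      1 / (2 * ψ₁) * (t ^ (-(1 : ℝ) / 2)) ^ (-1 + 1 / ψ₁) :=
  if_pos (rpow_le_one_of_one_le_of_nonpos ht (by norm_num))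

theorem logLaplaceDensity_rpow_neg_half_of_lt_one (ψ₁ ψ₂ : ℝ) {t : ℝ} (ht : t ∈ Ioo 0 1) :
    logLaplaceDensity ψ₁ ψ₂ (t ^ (-(1 : ℝ) / 2)) =
      1 / (2 * ψ₂) * (t ^ (-(1 : ℝ) / 2)) ^ (-1 - 1 / ψ₂) :=
  if_neg (one_lt_rpow_of_pos_of_lt_one_of_neg ht.1 ht.2 (by norm_num)).not_ge

theorem abs_mul_rpow_smul_marginal_of_one_le (β : ℝ) {ψ₁ : ℝ} (hψ₁ : ψ₁ ≠ 0) (ψ₂ : ℝ) {t : ℝ}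
    (ht : 1 ≤ t) :
    (|-(1 : ℝ) / 2| * t ^ (-(1 : ℝ) / 2 - 1)) •
        (normalScaleDensity β (t ^ (-(1 : ℝ) / 2)) *
          logLaplaceDensity ψ₁ ψ₂ (t ^ (-(1 : ℝ) / 2))) =
      (2 * π) ^ (-(1 : ℝ) / 2) / (4 * ψ₁) *
        (exp (-(β ^ 2 / 2) * t) * t ^ (-((1 + ψ₁) / (2 * ψ₁)))) := by
  have hexp : -(-1 + 1 / ψ₁ + 2) / 2 = -((1 + ψ₁) / (2 * ψ₁)) := by field_simp; ring
  rw [logLaplaceDensity_rpow_neg_half_of_one_le ψ₁ ψ₂ ht, mul_left_comm, ← mul_smul_comm,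
    abs_mul_rpow_smul_normalScaleDensity_mul_rpow β _ (by linarith), hexp]
  ring

theorem abs_mul_rpow_smul_marginal_of_lt_one (β ψ₁ : ℝ) {ψ₂ : ℝ} (hψ₂ : ψ₂ ≠ 0) {t : ℝ}
    (ht : t ∈ Ioo 0 1) :
    (|-(1 : ℝ) / 2| * t ^ (-(1 : ℝ) / 2 - 1)) •
        (normalScaleDensity β (t ^ (-(1 : ℝ) / 2)) *
          logLaplaceDensity ψ₁ ψ₂ (t ^ (-(1 : ℝ) / 2))) =
      (2 * π) ^ (-(1 : ℝ) / 2) / (4 * ψ₂) *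
        (t ^ ((1 + ψ₂) / (2 * ψ₂) - 1) * exp (-(β ^ 2 / 2) * t)) := by
  have hexp : -(-1 - 1 / ψ₂ + 2) / 2 = (1 + ψ₂) / (2 * ψ₂) - 1 := by field_simp; ring
  rw [logLaplaceDensity_rpow_neg_half_of_lt_one ψ₁ ψ₂ ht, mul_left_comm, ← mul_smul_comm,
    abs_mul_rpow_smul_normalScaleDensity_mul_rpow β _ ht.1, hexp]
  ring

/-- Closed form for the marginal of β under a N(0,λ²) kernel and a log-Laplace
prior on λ with scales ψ₁, ψ₂ (Theorem: marginal distribution). -/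
theorem log_laplace_marginal_closed_form (ψ₁ ψ₂ β : ℝ)
    (h₁ : 0 < ψ₁) (h₂ : 0 < ψ₂) (hβ : β ≠ 0) :
    (∫ l in Ioi (0 : ℝ),
        (2 * π * l ^ 2) ^ (-(1 : ℝ) / 2) * Real.exp (-β ^ 2 / (2 * l ^ 2)) *
          (if l ≤ 1 then (1 / (2 * ψ₁)) * l ^ (-1 + 1 / ψ₁)
           else (1 / (2 * ψ₂)) * l ^ (-1 - 1 / ψ₂))) =
      (1 / Real.sqrt (32 * π)) *
        ((1 / ψ₁) * genExpIntegral ((1 + ψ₁) / (2 * ψ₁)) (β ^ 2 / 2) +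
          (1 / ψ₂) * (2 / β ^ 2) ^ ((1 + ψ₂) / (2 * ψ₂)) *
            lowerGamma ((1 + ψ₂) / (2 * ψ₂)) (β ^ 2 / 2)) := by
  have hx : 0 < β ^ 2 / 2 := by positivity
  obtain ⟨hint₁, hE⟩ := integrableOn_and_integral_Ici_one_eq_genExpIntegral
    (fun t ht => abs_mul_rpow_smul_marginal_of_one_le β h₁.ne' ψ₂ ht) hx (by positivity)
  obtain ⟨hint₂, hγ⟩ := integrableOn_and_integral_Ioo_zero_one_eq_lowerGamma
    (fun t ht => abs_mul_rpow_smul_marginal_of_lt_one β ψ₁ h₂.ne' ht) hx (by positivity)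
  have hconst : 1 / √(32 * π) = (2 * π) ^ (-(1 : ℝ) / 2) / 4 := by
    rw [show 32 * π = 4 ^ 2 * (2 * π) by ring, sqrt_mul (by positivity), sqrt_sq (by norm_num),
      neg_div, rpow_neg (by positivity), ← sqrt_eq_rpow]
    ring
  change ∫ l in Ioi 0, normalScaleDensity β l * logLaplaceDensity ψ₁ ψ₂ l = _
  rw [← integral_comp_rpow_Ioi _ (by norm_num : -(1 : ℝ) / 2 ≠ 0),
    ← Ioo_union_Ici_eq_Ioi zero_lt_one,
    setIntegral_union ((Iio_disjoint_Ici le_rfl).mono_left Ioo_subset_Iio_self) measurableSet_Ici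
      hint₂ hint₁,
    hE, hγ, hconst, show 2 / β ^ 2 = (β ^ 2 / 2)⁻¹ by rw [inv_div], inv_rpow hx.le,
    ← rpow_neg hx.le]
  ring
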